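/- arXiv:1005.1283 — 3 statements merged into one kernel-verified Lean document; each statement's English description precedes it below -/
import Mathlib

section
/- Let A = ℤ[1/2] (the localization of ℤ away from 2), R = A[X₁, X₂, X₃, …] the polynomial ring over A in countably many variables X_i (i ≥ 1), with the convention X₀ = 1, and let I ⊆ R be the ideal generated by the polynomials X_i² + 2 Σ_{k=1}^{i} (−1)^k X_{i+k} X_{i−k} for all i ≥ 1. Then the A-algebra homomorphism from the polynomial ring A[Y₁, Y₃, Y₅, …] (in variables indexed by the odd positive integers) to the quotient R/I which sends Y_j to the class of X_j is an isomorphism of A-algebras. In other words, the ring of Lagrangian characteristic classes over ℤ[1/2] is the polynomial ring on the odd-indexed classes. -/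
/-- The variables `X_i` for `i ≥ 1` of the polynomial ring `A[X₁, X₂, X₃, …]`,
with the convention `X₀ = 1`. -/
noncomputable def Xvar (A : Type*) [CommRing A] : ℕ → MvPolynomial {i : ℕ // 1 ≤ i} A :=
  fun i => if h : 1 ≤ i then MvPolynomial.X ⟨i, h⟩ else 1

/-- The ideal `I ⊆ A[X₁, X₂, X₃, …]` generated by the polynomials
`X_i² + 2 Σ_{k=1}^{i} (−1)^k X_{i+k} X_{i−k}` for `i ≥ 1`. -/
noncomputable def relIdeal (A : Type*) [CommRing A] : Ideal (MvPolynomial {i : ℕ // 1 ≤ i} A) :=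
  Ideal.span {p : MvPolynomial {i : ℕ // 1 ≤ i} A | ∃ i : ℕ, 1 ≤ i ∧
    p = (Xvar A i) ^ 2 + 2 * ∑ k ∈ Finset.Icc 1 i, (-1) ^ k * Xvar A (i + k) * Xvar A (i - k)}

open MvPolynomial in
noncomputable def xp {A : Type*} [CommRing A] (c : A) : ℕ → MvPolynomial {j : ℕ // Odd j} A
  | n =>
    if h0 : n = 0 then 1
    else if ho : Odd n then MvPolynomial.X ⟨n, ho⟩
    else
      (-1) ^ (n / 2 + 1) * MvPolynomial.C c *
        (xp c (n / 2) ^ 2 +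
          2 * ∑ k ∈ (Finset.Icc 1 (n / 2 - 1)).attach,
            (-1) ^ (k : ℕ) * xp c (n / 2 + (k : ℕ)) * xp c (n / 2 - (k : ℕ)))
  termination_by n => n
  decreasing_by
  · rw [Nat.odd_iff] at ho; omega
  · have := Finset.mem_Icc.mp k.2; rw [Nat.odd_iff] at ho; omega
  · have := Finset.mem_Icc.mp k.2; rw [Nat.odd_iff] at ho; omega

lemma xp_zero {A : Type*} [CommRing A] (c : A) : xp c 0 = 1 := by rw [xp]; simp

lemma xp_odd {A : Type*} [CommRing A] (c : A) {n : ℕ} (h : Odd n) :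
    xp c n = MvPolynomial.X ⟨n, h⟩ := by
  rw [xp]
  have h0 : n ≠ 0 := by rintro rfl; simp [Nat.odd_iff] at h
  rw [dif_neg h0, dif_pos h]

lemma xp_even {A : Type*} [CommRing A] (c : A) (m : ℕ) (hm : 1 ≤ m) :
    xp c (2 * m) = (-1) ^ (m + 1) * MvPolynomial.C c *
      (xp c m ^ 2 + 2 * ∑ k ∈ Finset.Icc 1 (m - 1),
        (-1) ^ k * xp c (m + k) * xp c (m - k)) := by
  rw [xp]
  have h0 : ¬(2 * m = 0) := by omega
  have ho : ¬ Odd (2 * m) := by rw [Nat.odd_iff]; omega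
  rw [dif_neg h0, dif_neg ho]
  have hm2 : 2 * m / 2 = m := by omega
  rw [hm2, Finset.sum_attach (Finset.Icc 1 (m - 1)) fun k => (-1) ^ k * xp c (m + k) * xp c (m - k)]
lemma rel_iff {B : Type*} [CommRing B] (d : B) (hd : 2 * d = 1) (y : ℕ → B) (hy0 : y 0 = 1)
    (m : ℕ) (hm : 1 ≤ m) :
    y m ^ 2 + 2 * ∑ k ∈ Finset.Icc 1 m, (-1) ^ k * y (m + k) * y (m - k) = 0 ↔
    y (2 * m) = (-1) ^ (m + 1) * d *
      (y m ^ 2 + 2 * ∑ k ∈ Finset.Icc 1 (m - 1), (-1) ^ k * y (m + k) * y (m - k)) := by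
  have hsplit : ∑ k ∈ Finset.Icc 1 m, (-1 : B) ^ k * y (m + k) * y (m - k)
      = (∑ k ∈ Finset.Icc 1 (m - 1), (-1 : B) ^ k * y (m + k) * y (m - k))
        + (-1) ^ m * y (2 * m) := by
    have hm' : m = (m - 1) + 1 := by omega
    rw [hm', Finset.sum_Icc_succ_top (by omega : 1 ≤ m - 1 + 1), ← hm']
    congr 1
    rw [show m + m = 2 * m by ring, Nat.sub_self, hy0, mul_one]
  rw [hsplit]
  have hs : (-1 : B) ^ m * (-1) ^ m = 1 := by
    rw [← pow_add, ← two_mul, pow_mul]; simp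
  have hpow : (-1 : B) ^ (m + 1) = -((-1) ^ m) := by rw [pow_succ]; ring
  rw [hpow]
  set s := (-1 : B) ^ m with hsdef
  constructor
  · intro h
    linear_combination (s * d) * h - y (2 * m) * hd - (2 * d * y (2 * m)) * hs
  · intro h
    linear_combination (2 * s) * h
      - (y m ^ 2 + 2 * ∑ k ∈ Finset.Icc 1 (m - 1), (-1 : B) ^ k * y (m + k) * y (m - k)) * hd
      - (2 * d * (y m ^ 2 + 2 * ∑ k ∈ Finset.Icc 1 (m - 1), (-1 : B) ^ k * y (m + k) * y (m - k))) * hs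

lemma xp_rel {A : Type*} [CommRing A] (c : A) (hc : 2 * c = 1) (m : ℕ) (hm : 1 ≤ m) :
    xp c m ^ 2 + 2 * ∑ k ∈ Finset.Icc 1 m, (-1) ^ k * xp c (m + k) * xp c (m - k) = 0 := by
  have hd : (2 : MvPolynomial {j : ℕ // Odd j} A) * MvPolynomial.C c = 1 := by
    have : (MvPolynomial.C (2 * c) : MvPolynomial {j : ℕ // Odd j} A) = MvPolynomial.C 1 := by
      rw [hc]
    simpa [map_mul, map_ofNat] using this
  exact (rel_iff (MvPolynomial.C c) hd (xp c) (xp_zero c) m hm).mpr (xp_even c m hm)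

/-- for `A = ℤ[1/2]` (the localization of `ℤ` away from `2`), the `A`-algebra
homomorphism `A[Y₁, Y₃, Y₅, …] → R/I` (variables indexed by odd positive integers) sending
`Y_j` to the class of `X_j` is an isomorphism of `A`-algebras. -/
theorem stmt_4 (A : Type*) [CommRing A] [IsLocalization.Away (2 : ℤ) A] :
    Function.Bijective
      (MvPolynomial.aeval
          (fun j : {j : ℕ // Odd j} => Ideal.Quotient.mk (relIdeal A) (Xvar A j.1)) :
        MvPolynomial {j : ℕ // Odd j} A →ₐ[A]
          MvPolynomial {i : ℕ // 1 ≤ i} A ⧸ relIdeal A) := by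
  classical
  have h2 : IsUnit (2 : A) := by
    have := IsLocalization.Away.algebraMap_isUnit (S := A) (2 : ℤ)
    simpa using this
  obtain ⟨c, hc⟩ := h2.exists_right_inv
  set ψ : MvPolynomial {j : ℕ // Odd j} A →ₐ[A]
      MvPolynomial {i : ℕ // 1 ≤ i} A ⧸ relIdeal A :=
    MvPolynomial.aeval
      (fun j : {j : ℕ // Odd j} => Ideal.Quotient.mk (relIdeal A) (Xvar A j.1)) with hψ
  let φ : MvPolynomial {i : ℕ // 1 ≤ i} A →ₐ[A] MvPolynomial {j : ℕ // Odd j} A :=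
    MvPolynomial.aeval (fun i : {i : ℕ // 1 ≤ i} => xp c i.1)
  have hφX : ∀ n : ℕ, φ (Xvar A n) = xp c n := by
    intro n
    by_cases h : 1 ≤ n
    · simp [Xvar, h, φ]
    · have h0 : n = 0 := by omega
      subst h0
      simp [Xvar, xp_zero, φ]
  have hker : ∀ a ∈ relIdeal A, φ a = 0 := by
    have hle : relIdeal A ≤ RingHom.ker (φ : MvPolynomial {i : ℕ // 1 ≤ i} A →+* MvPolynomial {j : ℕ // Odd j} A) := by
      rw [relIdeal, Ideal.span_le]
      rintro p ⟨i, hi, rfl⟩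
      simp only [SetLike.mem_coe, RingHom.mem_ker, RingHom.coe_coe, map_add, map_pow,
        map_mul, map_sum, map_neg, map_one, map_ofNat, hφX]
      exact xp_rel c hc i hi
    exact fun a ha => hle ha
  let φbar : (MvPolynomial {i : ℕ // 1 ≤ i} A ⧸ relIdeal A) →ₐ[A]
      MvPolynomial {j : ℕ // Odd j} A :=
    Ideal.Quotient.liftₐ (relIdeal A) φ hker
  have hφbar : ∀ p, φbar (Ideal.Quotient.mk (relIdeal A) p) = φ p := fun p =>
    Ideal.Quotient.liftₐ_apply (relIdeal A) φ hker _ ▸ Ideal.Quotient.lift_mk (relIdeal A) _ _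
  have hleft : ∀ s, φbar (ψ s) = s := by
    have hcomp : φbar.comp ψ = AlgHom.id A _ := by
      apply MvPolynomial.algHom_ext
      intro j
      simp only [AlgHom.comp_apply, hψ, MvPolynomial.aeval_X, AlgHom.id_apply]
      rw [hφbar, hφX, xp_odd c j.2]
    intro s
    calc φbar (ψ s) = (φbar.comp ψ) s := rfl
    _ = s := by rw [hcomp]; rfl
  have hkey : ∀ n : ℕ, ψ (xp c n) = Ideal.Quotient.mk (relIdeal A) (Xvar A n) := by
    intro n
    induction n using Nat.strong_induction_on with
    | _ n IH =>
      by_cases h0 : n = 0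
      · subst h0
        simp [xp_zero, Xvar]
      by_cases ho : Odd n
      · rw [xp_odd c ho, hψ, MvPolynomial.aeval_X]
      · have hm : 1 ≤ n / 2 := by rw [Nat.odd_iff] at ho; omega
        have hn : n = 2 * (n / 2) := by rw [Nat.odd_iff] at ho; omega
        set m := n / 2 with hmdef
        set z : ℕ → MvPolynomial {i : ℕ // 1 ≤ i} A ⧸ relIdeal A :=
          fun n => Ideal.Quotient.mk (relIdeal A) (Xvar A n) with hz
        have hz0 : z 0 = 1 := by simp [hz, Xvar]
        have hd' : (2 : MvPolynomial {i : ℕ // 1 ≤ i} A ⧸ relIdeal A)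
            * algebraMap A _ c = 1 := by
          have := congrArg (algebraMap A (MvPolynomial {i : ℕ // 1 ≤ i} A ⧸ relIdeal A)) hc
          simpa [map_mul, map_ofNat] using this
        have hrelz : z m ^ 2 + 2 * ∑ k ∈ Finset.Icc 1 m, (-1) ^ k * z (m + k) * z (m - k)
            = 0 := by
          have hmem : (Xvar A m ^ 2 + 2 * ∑ k ∈ Finset.Icc 1 m,
              (-1) ^ k * Xvar A (m + k) * Xvar A (m - k)) ∈ relIdeal A :=
            Ideal.subset_span ⟨m, hm, rfl⟩
          have h0' := (Ideal.Quotient.eq_zero_iff_mem).mpr hmem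
          simpa only [hz, map_add, map_pow, map_mul, map_sum, map_neg, map_one, map_ofNat]
            using h0'
        have heq := (rel_iff (algebraMap A _ c) hd' z hz0 m hm).mp hrelz
        rw [hn, xp_even c m hm]
        have hIH : ∀ j, j < n → ψ (xp c j) = z j := fun j hj => IH j hj
        have hsum : ψ (∑ k ∈ Finset.Icc 1 (m - 1), (-1) ^ k * xp c (m + k) * xp c (m - k))
            = ∑ k ∈ Finset.Icc 1 (m - 1), (-1) ^ k * z (m + k) * z (m - k) := by
          rw [map_sum]
          refine Finset.sum_congr rfl fun k hk => ?_
          have hk' := Finset.mem_Icc.mp hk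
          rw [map_mul, map_mul, map_pow, map_neg, map_one,
            hIH (m + k) (by omega), hIH (m - k) (by omega)]
        rw [map_mul, map_mul, map_add, map_mul, map_pow, map_pow, map_neg, map_one,
          hsum, hIH m (by omega), map_ofNat]
        have hCc : ψ (MvPolynomial.C c) = algebraMap A _ c := by
          rw [hψ]; exact MvPolynomial.aeval_C _ c
        rw [hCc, ← heq]
  have hsurj : Function.Surjective
      (ψ : MvPolynomial {j : ℕ // Odd j} A →
        MvPolynomial {i : ℕ // 1 ≤ i} A ⧸ relIdeal A) := by
    intro q
    obtain ⟨p, rfl⟩ := Ideal.Quotient.mk_surjective q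
    refine ⟨φ p, ?_⟩
    have hcomp : ψ.comp φ = Ideal.Quotient.mkₐ A (relIdeal A) := by
      apply MvPolynomial.algHom_ext
      intro i
      simp only [AlgHom.comp_apply, MvPolynomial.aeval_X, Ideal.Quotient.mkₐ_eq_mk]
      have : (MvPolynomial.X i : MvPolynomial {i : ℕ // 1 ≤ i} A) = Xvar A i.1 := by
        simp [Xvar, i.2]
      rw [show φ (MvPolynomial.X i) = xp c i.1 from by simp [φ], hkey i.1, this]
    calc ψ (φ p) = (ψ.comp φ) p := rfl
    _ = Ideal.Quotient.mk (relIdeal A) p := by rw [hcomp]; rfl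
  exact ⟨Function.LeftInverse.injective hleft, hsurj⟩
end

section
/- Let A = ℤ[1/2] (the localization of ℤ away from 2), R = A[X₁, X₂, X₃, …] the polynomial ring over A in countably many variables X_i (i ≥ 1), with the convention X₀ = 1, and let I ⊆ R be the ideal generated by the polynomials X_i² + 2 Σ_{k=1}^{i} (−1)^k X_{i+k} X_{i−k} for all i ≥ 1. Then for every i ≥ 1, the class of the even-indexed variable X_{2i} in R/I lies in the A-subalgebra of R/I generated by the classes of the odd-indexed variables X₁, X₃, …, X_{2i−1}. (The even Chern classes are expressed by the odd ones.) -/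
lemma stmt5_aux (A : Type*) [CommRing A] (v : A) (hv : 2 * v = 1) :
    ∀ i : ℕ, 1 ≤ i →
      Ideal.Quotient.mk (relIdeal A) (Xvar A (2 * i)) ∈
        Algebra.adjoin A
          {x : MvPolynomial {i : ℕ // 1 ≤ i} A ⧸ relIdeal A |
            ∃ j : ℕ, Odd j ∧ j ≤ 2 * i - 1 ∧ x = Ideal.Quotient.mk (relIdeal A) (Xvar A j)} := by
  intro i
  induction i using Nat.strong_induction_on with
  | _ i IH =>
  intro hi
  set q := Ideal.Quotient.mk (relIdeal A) with hq
  set S := Algebra.adjoin A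
      {x : MvPolynomial {i : ℕ // 1 ≤ i} A ⧸ relIdeal A |
        ∃ j : ℕ, Odd j ∧ j ≤ 2 * i - 1 ∧ x = q (Xvar A j)} with hS
  have hX : ∀ j : ℕ, 1 ≤ j → j ≤ 2 * i - 1 → q (Xvar A j) ∈ S := by
    intro j hj1 hj2
    rcases Nat.even_or_odd j with he | ho
    · obtain ⟨m, rfl⟩ := he
      have hm1 : 1 ≤ m := by omega
      have hmem := IH m (by omega) hm1
      rw [show m + m = 2 * m by ring]
      refine Algebra.adjoin_mono ?_ hmem
      rintro x ⟨j, hjo, hjle, rfl⟩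
      exact ⟨j, hjo, by omega, rfl⟩
    · exact Algebra.subset_adjoin ⟨j, ho, hj2, rfl⟩
  obtain ⟨n, rfl⟩ : ∃ n, i = n + 1 := ⟨i - 1, by omega⟩
  have hx0 : Xvar A 0 = 1 := by simp [Xvar]
  have hrel : q ((Xvar A (n + 1)) ^ 2 +
      2 * ∑ k ∈ Finset.Icc 1 (n + 1),
        (-1) ^ k * Xvar A (n + 1 + k) * Xvar A (n + 1 - k)) = 0 :=
    Ideal.Quotient.eq_zero_iff_mem.2
      (Ideal.subset_span ⟨n + 1, Nat.le_add_left 1 n, rfl⟩)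
  rw [Finset.sum_Icc_succ_top (by omega : 1 ≤ n + 1), Nat.sub_self, hx0,
    show n + 1 + (n + 1) = 2 * (n + 1) by ring] at hrel
  simp only [map_add, map_mul, map_pow, map_sum, map_neg, map_one, map_ofNat] at hrel
  have hw : (2 : MvPolynomial {i : ℕ // 1 ≤ i} A ⧸ relIdeal A) *
      algebraMap A _ v = 1 := by
    rw [← map_ofNat (algebraMap A (MvPolynomial {i : ℕ // 1 ≤ i} A ⧸ relIdeal A)) 2,
      ← map_mul, hv, map_one]
  set e : MvPolynomial {i : ℕ // 1 ≤ i} A ⧸ relIdeal A := (-1) ^ (n + 1) with hedef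
  have he : e * e = 1 := by
    rw [hedef, ← pow_add]
    exact Even.neg_one_pow (α := MvPolynomial {i : ℕ // 1 ≤ i} A ⧸ relIdeal A) (Even.add_self (n + 1))
  set w : MvPolynomial {i : ℕ // 1 ≤ i} A ⧸ relIdeal A := algebraMap A _ v with hwdef
  have key : q (Xvar A (2 * (n + 1))) = -(e * w) *
      ((q (Xvar A (n + 1))) ^ 2 +
        2 * ∑ k ∈ Finset.Icc 1 n,
          (-1) ^ k * q (Xvar A (n + 1 + k)) * q (Xvar A (n + 1 - k))) := by
    linear_combination (e * w) * hrel - (2 * w * q (Xvar A (2 * (n + 1)))) * he -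
      q (Xvar A (2 * (n + 1))) * hw
  rw [key]
  refine S.mul_mem (S.neg_mem (S.mul_mem (S.pow_mem (S.neg_mem S.one_mem) (n + 1))
    (S.algebraMap_mem v)))
    (S.add_mem (S.pow_mem (hX (n + 1) (by omega) (by omega)) 2)
      (S.mul_mem ?_ (Subalgebra.sum_mem S ?_)))
  · have : (2 : MvPolynomial {i : ℕ // 1 ≤ i} A ⧸ relIdeal A) = algebraMap A _ 2 := by
      rw [map_ofNat]
    rw [this]; exact S.algebraMap_mem 2
  · intro k hk
    simp only [Finset.mem_Icc] at hk
    exact S.mul_mem (S.mul_mem (S.pow_mem (S.neg_mem S.one_mem) k)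
      (hX (n + 1 + k) (by omega) (by omega))) (hX (n + 1 - k) (by omega) (by omega))

/-- for `A = ℤ[1/2]` (the localization of `ℤ` away from `2`) and every
`i ≥ 1`, the class of `X_{2i}` in `R/I` lies in the `A`-subalgebra generated by the
classes of the odd-indexed variables `X₁, X₃, …, X_{2i−1}`. -/
theorem stmt_5 (A : Type*) [CommRing A] [IsLocalization.Away (2 : ℤ) A] :
    ∀ i : ℕ, 1 ≤ i →
      Ideal.Quotient.mk (relIdeal A) (Xvar A (2 * i)) ∈
        Algebra.adjoin A
          {x : MvPolynomial {i : ℕ // 1 ≤ i} A ⧸ relIdeal A |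
            ∃ j : ℕ, Odd j ∧ j ≤ 2 * i - 1 ∧ x = Ideal.Quotient.mk (relIdeal A) (Xvar A j)} := by
  have h2 : IsUnit (2 : A) := by
    have h := IsLocalization.Away.algebraMap_isUnit (S := A) (2 : ℤ)
    rwa [map_ofNat] at h
  obtain ⟨u, hu⟩ := h2
  exact stmt5_aux A ↑u⁻¹ (by rw [← hu]; exact u.mul_inv)
end

section
/- Let h ≥ 1 and m ≥ h − 1 be integers and set m' = m − h + 1. In the ring of multivariate formal power series over ℚ in the variables x₁, …, x_m, y₁, …, y_{m'}, z, consider F = (∏_{i=1}^{m} (1 + x_i + z)) · (∏_{j=1}^{m'} (1 + y_j + z))^{-1}, where the inverse exists since each factor 1 + y_j + z has constant term 1. Then every coefficient of F at a monomial of total degree h in which z occurs with positive exponent is zero; equivalently, the total-degree-h homogeneous component of F equals the total-degree-h homogeneous component of (∏_{i=1}^{m} (1 + x_i)) · (∏_{j=1}^{m'} (1 + y_j))^{-1}. (This is the statement that for a virtual bundle E of rank h − 1 and any line bundle ζ one has c_h(E ⊗ ζ) = c_h(E), expressed in Chern roots x_i, y_j and z = c₁(ζ).) -/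
/-!
The derivation `D = ∂/∂z + E`, where `E = ∑ₛ Xₛ ∂/∂Xₛ` is the Euler operator, fixes every factor
`1 + xᵢ + z` and `1 + yⱼ + z`, hence `D F = (m - m') F = (h - 1) F`. At a monomial `d` of degree
`h - 1` the Euler part contributes `(h - 1) F_d` to both sides, which leaves
`(d_z + 1) F_{d + z} = 0`. Setting `z = 0` is a ring homomorphism that sends `F` to `G` and keeps
exactly the coefficients at monomials free of `z`; this gives the comparison with `G`.
-/

namespace Derivation

section CommSemiring

variable {R A : Type*} [CommSemiring R] [CommSemiring A] [Algebra R A] (D : Derivation R A A)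

theorem apply_mul_of_apply_eq_smul {a b : A} {c c' : R} (ha : D a = c • a) (hb : D b = c' • b) :
    D (a * b) = (c + c') • (a * b) := by
  rw [D.leibniz, ha, hb, smul_comm a c', smul_comm b c, smul_eq_mul, smul_eq_mul, mul_comm b a,
    add_comm, add_smul]

theorem apply_prod_of_apply_eq_smul {ι : Type*} (s : Finset ι) (u : ι → A) (c : ι → R)
    (h : ∀ i ∈ s, D (u i) = c i • u i) :
    D (∏ i ∈ s, u i) = (∑ i ∈ s, c i) • ∏ i ∈ s, u i := by
  induction s using Finset.cons_induction with
  | empty => simp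
  | cons a s ha ih =>
    rw [Finset.prod_cons, Finset.sum_cons]
    exact D.apply_mul_of_apply_eq_smul (h a (s.mem_cons_self a))
      (ih fun i hi => h i (Finset.mem_cons_of_mem hi))

end CommSemiring

theorem apply_eq_neg_smul_of_mul_eq_one {R A : Type*} [CommRing R] [CommRing A] [Algebra R A]
    (D : Derivation R A A) {a b : A} {c : R} (hab : a * b = 1) (ha : D a = c • a) :
    D b = -c • b := by
  rw [D.leibniz_of_mul_eq_one (mul_comm a b ▸ hab), ha, smul_comm, sq, smul_eq_mul, neg_mul,
    mul_assoc, mul_comm b a, hab, mul_one, smul_neg, neg_smul]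

end Derivation

namespace MvPowerSeries

open Finsupp

variable {σ R : Type*}

section Euler

variable [CommSemiring R]

theorem coeff_X_mul_pderiv (s : σ) (f : MvPowerSeries σ R) (d : σ →₀ ℕ) :
    coeff d (X s * pderiv R s f) = d s * coeff d f := by
  classical
  rw [X_def, coeff_monomial_mul, one_mul]
  split_ifs with hd
  · rw [coeff_pderiv, tsub_add_cancel_of_le hd, tsub_apply, single_eq_same, ← Nat.cast_add_one,
      Nat.sub_add_cancel (single_le_iff.mp hd), mul_comm]
  · rw [single_le_iff, not_le, Nat.lt_one_iff] at hd
    simp [hd]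

variable [Fintype σ]

variable (R) in
noncomputable def eulerDerivation : Derivation R (MvPowerSeries σ R) (MvPowerSeries σ R) :=
  ∑ s : σ, (X s : MvPowerSeries σ R) • pderiv R s

theorem eulerDerivation_apply (f : MvPowerSeries σ R) :
    eulerDerivation R f = ∑ s, X s * pderiv R s f := by
  rw [eulerDerivation, ← Derivation.coeFnAddMonoidHom_apply, map_sum, Finset.sum_apply]
  rfl

theorem coeff_eulerDerivation (f : MvPowerSeries σ R) (d : σ →₀ ℕ) :
    coeff d (eulerDerivation R f) = d.degree * coeff d f := by
  simp [eulerDerivation_apply, coeff_X_mul_pderiv, degree_eq_sum, Finset.sum_mul]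

theorem eulerDerivation_X (s : σ) : eulerDerivation R (X s) = X s := by
  classical
  simp [eulerDerivation_apply, pderiv_X, Pi.single_apply]

end Euler

section KillVar

variable [CommSemiring R]

variable (R) in
noncomputable def killVar (i : σ) : MvPowerSeries σ R →ₐ[R] MvPowerSeries σ R :=
  (rename (Function.Embedding.subtype (· ≠ i))).comp
    (killCompl (Function.Embedding.subtype (· ≠ i)))

theorem coeff_killVar (i : σ) (f : MvPowerSeries σ R) (d : σ →₀ ℕ) :
    coeff d (killVar R i f) = if d i = 0 then coeff d f else 0 := by
  set e := Function.Embedding.subtype (· ≠ i)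
  have hrange : d ∈ Set.range (embDomain e) ↔ d i = 0 := by
    rw [mem_range_embDomain_iff, Function.Embedding.coe_subtype, Subtype.range_coe_subtype,
      Set.subset_def]
    simp [not_imp_comm]
  rw [killVar, AlgHom.comp_apply]
  split_ifs with hd
  · obtain ⟨d', rfl⟩ := hrange.mpr hd
    rw [coeff_embDomain_rename, coeff_killCompl]
  · refine coeff_rename_eq_zero _ _ ?_
    rwa [← funext (embDomain_eq_mapDomain e), hrange]

theorem killVar_X_self (i : σ) : killVar R i (X i) = 0 := by
  rw [killVar, AlgHom.comp_apply, killCompl_X_eq_zero (by simp), map_zero]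

theorem killVar_X_of_ne {i j : σ} (h : j ≠ i) : killVar R i (X j) = X j := by
  rw [killVar, AlgHom.comp_apply]
  exact (congrArg _ (killCompl_X (e := Function.Embedding.subtype (· ≠ i)) ⟨j, h⟩)).trans
    (rename_X _ _)

end KillVar

section Field

variable {k : Type*} [Field k] {ι κ : Type*} [Fintype ι] [Fintype κ]

theorem apply_inv_of_constantCoeff_ne_zero {τ F : Type*}
    [FunLike F (MvPowerSeries σ k) (MvPowerSeries τ k)]
    [MonoidHomClass F (MvPowerSeries σ k) (MvPowerSeries τ k)] (φ : F)
    {f : MvPowerSeries σ k} (hf : constantCoeff f ≠ 0) : φ f⁻¹ = (φ f)⁻¹ := by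
  have hφ : φ f * φ f⁻¹ = 1 := by rw [← map_mul, f.mul_inv_cancel hf, map_one]
  have : constantCoeff (φ f) ≠ 0 :=
    left_ne_zero_of_mul_eq_one (by rw [← map_mul, hφ, map_one])
  rw [MvPowerSeries.eq_inv_iff_mul_eq_one this, mul_comm, hφ]

theorem killVar_prod_one_add_X_add_X_mul_inv (u : ι → σ) (v : κ → σ) {z : σ}
    (hu : ∀ i, u i ≠ z) (hv : ∀ j, v j ≠ z) :
    killVar k z ((∏ i, (1 + X (u i) + X z)) * (∏ j, (1 + X (v j) + X z))⁻¹) =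
      (∏ i, (1 + X (u i))) * (∏ j, (1 + X (v j)))⁻¹ := by
  rw [map_mul, apply_inv_of_constantCoeff_ne_zero _ (by simp), map_prod, map_prod]
  simp [killVar_X_self, killVar_X_of_ne, hu, hv]

variable [Fintype σ]

theorem pderiv_add_eulerDerivation_one_add_X_add_X {s z : σ} (h : s ≠ z) :
    (pderiv k z + eulerDerivation k : Derivation k (MvPowerSeries σ k) (MvPowerSeries σ k))
      (1 + X s + X z) = (1 : k) • (1 + X s + X z) := by
  simp [eulerDerivation_X, pderiv_X_of_ne h]
  abel

theorem coeff_pderiv_add_eulerDerivation (z : σ) (f : MvPowerSeries σ k) (d : σ →₀ ℕ) :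
    coeff d ((pderiv k z + eulerDerivation k : Derivation k _ (MvPowerSeries σ k)) f) =
      coeff (d + single z 1) f * (d z + 1) + d.degree * coeff d f := by
  rw [Derivation.add_apply, map_add, coeff_pderiv, coeff_eulerDerivation]

theorem coeff_prod_one_add_X_add_X_mul_inv_eq_zero [CharZero k] (u : ι → σ) (v : κ → σ) {z : σ}
    (hu : ∀ i, u i ≠ z) (hv : ∀ j, v j ≠ z) {d : σ →₀ ℕ}
    (hd : Fintype.card ι + 1 = Fintype.card κ + d.degree) (hdz : 0 < d z) :
    coeff d ((∏ i, (1 + X (u i) + X z)) * (∏ j, (1 + X (v j) + X z))⁻¹ : MvPowerSeries σ k) =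
      0 := by
  set D : Derivation k _ (MvPowerSeries σ k) := pderiv k z + eulerDerivation k
  set A : MvPowerSeries σ k := ∏ i, (1 + X (u i) + X z)
  set B : MvPowerSeries σ k := ∏ j, (1 + X (v j) + X z)
  have hA : D A = (Fintype.card ι : k) • A := by
    simpa using D.apply_prod_of_apply_eq_smul Finset.univ _ (fun _ => (1 : k))
      fun i _ => pderiv_add_eulerDerivation_one_add_X_add_X (hu i)
  have hB : D B = (Fintype.card κ : k) • B := by
    simpa using D.apply_prod_of_apply_eq_smul Finset.univ _ (fun _ => (1 : k))
      fun j _ => pderiv_add_eulerDerivation_one_add_X_add_X (hv j)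
  have hB' : D B⁻¹ = -(Fintype.card κ : k) • B⁻¹ :=
    D.apply_eq_neg_smul_of_mul_eq_one (B.mul_inv_cancel (by simp [B])) hB
  have hle : single z 1 ≤ d := single_le_iff.mpr hdz
  have hdeg : ((d - single z 1).degree : k) = Fintype.card ι - Fintype.card κ := by
    have := congrArg (Nat.cast (R := k)) hd
    rw [← tsub_add_cancel_of_le hle, map_add, degree_single] at this
    push_cast at this
    linear_combination -this
  have hcoeff := congrArg (coeff (d - single z 1)) (D.apply_mul_of_apply_eq_smul hA hB')
  rw [coeff_pderiv_add_eulerDerivation, tsub_add_cancel_of_le hle, hdeg, coeff_smul,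
    ← sub_eq_add_neg, add_eq_right, mul_eq_zero] at hcoeff
  exact hcoeff.resolve_right (Nat.cast_add_one_ne_zero _)

end Field

end MvPowerSeries

theorem stmt_6_general (h m m' : ℕ) (hm : m + 1 = m' + h) :
    let σ := Fin m ⊕ Fin m' ⊕ Unit
    let x : Fin m → MvPowerSeries σ ℚ := fun i => MvPowerSeries.X (Sum.inl i)
    let y : Fin m' → MvPowerSeries σ ℚ := fun j => MvPowerSeries.X (Sum.inr (Sum.inl j))
    let z : MvPowerSeries σ ℚ := MvPowerSeries.X (Sum.inr (Sum.inr ()))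
    let F : MvPowerSeries σ ℚ := (∏ i, (1 + x i + z)) * (∏ j, (1 + y j + z))⁻¹
    let G : MvPowerSeries σ ℚ := (∏ i, (1 + x i)) * (∏ j, (1 + y j))⁻¹
    (∀ d : σ →₀ ℕ, (d.sum fun _ e => e) = h → 0 < d (Sum.inr (Sum.inr ())) →
      MvPowerSeries.coeff d F = 0) ∧
    (∀ d : σ →₀ ℕ, (d.sum fun _ e => e) = h →
      MvPowerSeries.coeff d F = MvPowerSeries.coeff d G) := by
  intro σ x y z F G
  have hx : ∀ i : Fin m, (Sum.inl i : σ) ≠ Sum.inr (Sum.inr ()) := by simp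
  have hy : ∀ j : Fin m', (Sum.inr (Sum.inl j) : σ) ≠ Sum.inr (Sum.inr ()) := by simp
  have hF (d : σ →₀ ℕ) (hd : (d.sum fun _ e => e) = h) (hdz : 0 < d (Sum.inr (Sum.inr ()))) :
      MvPowerSeries.coeff d F = 0 :=
    MvPowerSeries.coeff_prod_one_add_X_add_X_mul_inv_eq_zero _ _ hx hy
      (by rw [Fintype.card_fin, Fintype.card_fin, hm, ← hd]; rfl) hdz
  refine ⟨hF, fun d hd => ?_⟩
  have hG : G = MvPowerSeries.killVar ℚ (Sum.inr (Sum.inr ())) F :=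
    (MvPowerSeries.killVar_prod_one_add_X_add_X_mul_inv _ _ hx hy).symm
  rw [hG, MvPowerSeries.coeff_killVar]
  split_ifs with hdz
  · rfl
  · exact hF d hd (Nat.pos_of_ne_zero hdz)

/-- Let `h ≥ 1`, `m' = m − h + 1` (i.e. `m + 1 = m' + h`).  In the ring of
formal power series over `ℚ` in the variables `x₁, …, x_m, y₁, …, y_{m'}, z`, let
`F = (∏ᵢ (1 + xᵢ + z)) · (∏ⱼ (1 + yⱼ + z))⁻¹`.  Then every coefficient of `F` at a
monomial of total degree `h` in which `z` occurs with positive exponent vanishes;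
equivalently, the degree-`h` component of `F` agrees with that of
`G = (∏ᵢ (1 + xᵢ)) · (∏ⱼ (1 + yⱼ))⁻¹`.  (This is `c_h(E ⊗ ζ) = c_h(E)` for a virtual
bundle `E` of rank `h − 1`.) -/
theorem stmt_6 (h m m' : ℕ) (h1 : 1 ≤ h) (hm : m + 1 = m' + h) :
    let σ := Fin m ⊕ Fin m' ⊕ Unit
    let x : Fin m → MvPowerSeries σ ℚ := fun i => MvPowerSeries.X (Sum.inl i)
    let y : Fin m' → MvPowerSeries σ ℚ := fun j => MvPowerSeries.X (Sum.inr (Sum.inl j))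
    let z : MvPowerSeries σ ℚ := MvPowerSeries.X (Sum.inr (Sum.inr ()))
    let F : MvPowerSeries σ ℚ := (∏ i, (1 + x i + z)) * (∏ j, (1 + y j + z))⁻¹
    let G : MvPowerSeries σ ℚ := (∏ i, (1 + x i)) * (∏ j, (1 + y j))⁻¹
    (∀ d : σ →₀ ℕ, (d.sum fun _ e => e) = h → 0 < d (Sum.inr (Sum.inr ())) →
      MvPowerSeries.coeff d F = 0) ∧
    (∀ d : σ →₀ ℕ, (d.sum fun _ e => e) = h →
      MvPowerSeries.coeff d F = MvPowerSeries.coeff d G) :=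
  stmt_6_general h m m' hm
end
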